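/- arXiv:1610.07297 — 2 statements merged into one kernel-verified Lean document; each statement's English description precedes it below -/
import Mathlib

section
/- Let W and V be B-DMCs with the same finite output alphabet Y, and assume V(y|x) > 0 for all y ∈ Y and x ∈ {0,1}. Then the plus polar transform satisfies D(W⁺, V⁺) ≤ 2·D(W,V) − D(W,V)². -/
open Finset
open scoped Classical

/-- A channel `W : {0,1} → Y` is a B-DMC if each row is a probability mass function. -/
def IsBDMC {Y : Type*} [Fintype Y] (W : Bool → Y → ℝ) : Prop :=
  (∀ x y, 0 ≤ W x y) ∧ (∀ x, ∑ y : Y, W x y = 1)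

/-- The output distribution of a channel under uniform inputs. -/
noncomputable def qOut {Y : Type*} (W : Bool → Y → ℝ) (y : Y) : ℝ :=
  (W false y + W true y) / 2

/-- The Δ parameter of a channel (with the convention 0/0 = 0, automatic in Lean). -/
noncomputable def Δch {Y : Type*} (V : Bool → Y → ℝ) (y : Y) : ℝ :=
  (V false y - V true y) / (V false y + V true y)

/-- The likelihood ratio of a channel. -/
noncomputable def LR {Y : Type*} (V : Bool → Y → ℝ) (y : Y) : ℝ :=
  V true y / V false y

/-- The mismatched mutual information `I(W, V)` (base-2 logarithm). -/
noncomputable def Imm {Y : Type*} [Fintype Y] (W V : Bool → Y → ℝ) : ℝ :=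
  (1/2) * ∑ x : Bool, ∑ y : Y, W x y * Real.logb 2 (V x y / qOut V y)

/-- The mismatched ML decoding error probability `P_{e,ML}(W, V)`. -/
noncomputable def PeML {Y : Type*} [Fintype Y] (W V : Bool → Y → ℝ) : ℝ :=
  (1/2) * ∑ y ∈ univ.filter (fun y => 1 < LR V y), W false y
  + (1/4) * ∑ y ∈ univ.filter (fun y => LR V y = 1), W false y
  + (1/2) * ∑ y ∈ univ.filter (fun y => LR V y < 1), W true y
  + (1/4) * ∑ y ∈ univ.filter (fun y => LR V y = 1), W true y

/-- The mismatched parameter `D(W, V)`. -/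
noncomputable def Dpar {Y : Type*} [Fintype Y] (W V : Bool → Y → ℝ) : ℝ :=
  ∑ y : Y, qOut W y * Real.sqrt |Δch V y|

/-- The mismatched variational distance `T(W, V)`. -/
noncomputable def Tpar {Y : Type*} [Fintype Y] (W V : Bool → Y → ℝ) : ℝ :=
  ∑ y : Y, qOut W y * |Δch V y|

/-- The mismatched parameter `T_k(W, V)`. -/
noncomputable def Tkpar {Y : Type*} [Fintype Y] (k : ℕ) (W V : Bool → Y → ℝ) : ℝ :=
  ∑ y : Y, qOut W y * |Δch V y| ^ k

/-- The mismatched Bhattacharyya parameter `Z(W, V)`. -/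
noncomputable def Zpar {Y : Type*} [Fintype Y] (W V : Bool → Y → ℝ) : ℝ :=
  (1/2) * ∑ y : Y, W false y * Real.sqrt (LR V y)
  + (1/2) * ∑ y : Y, W true y * Real.sqrt (1 / LR V y)

/-- The minus polar transform `W⁻(y₁y₂ | u₁) = (1/2) ∑_{u₂} W(y₁|u₁⊕u₂) W(y₂|u₂)`. -/
noncomputable def polarMinus {Y : Type*} (W : Bool → Y → ℝ) : Bool → Y × Y → ℝ :=
  fun u₁ p => (1/2) * ∑ u₂ : Bool, W (Bool.xor u₁ u₂) p.1 * W u₂ p.2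

/-- The plus polar transform `W⁺(y₁y₂u₁ | u₂) = (1/2) W(y₁|u₁⊕u₂) W(y₂|u₂)`,
with output `(y₁, y₂, u₁)`. -/
noncomputable def polarPlus {Y : Type*} (W : Bool → Y → ℝ) : Bool → Y × Y × Bool → ℝ :=
  fun u₂ p => (1/2) * W (Bool.xor p.2.2 u₂) p.1 * W u₂ p.2.1

/-! With `δ = Δch V`, the plus channel has
`Δch V⁺ (y₁, y₂, u₁) = (±δ y₁ + δ y₂) / (1 ± δ y₁ δ y₂)` (the addition law of `tanh`), and the two
values of `u₁` together carry the weight `q_W y₁ q_W y₂`. On `[0, 1]` one has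
`√((s + t) / (1 + s t)) ≤ 1 - (1 - √s) (1 - √t)`, so `1 - √|Δch|` behaves submultiplicatively and
`D(W⁺, V⁺) ≤ ∑ q_W y₁ q_W y₂ (1 - (1 - √|δ y₁|) (1 - √|δ y₂|)) = 1 - (1 - D(W, V))²`. -/

lemma abs_add_div_one_add_mul_le {a b : ℝ} (ha : |a| ≤ 1) (hb : |b| ≤ 1) :
    |(a + b) / (1 + a * b)| ≤ (|a| + |b|) / (1 + |a| * |b|) := by
  have hab : |a * b| ≤ 1 := abs_mul a b ▸ mul_le_one₀ ha (abs_nonneg b) hb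
  rcases (show 0 ≤ 1 + a * b by linarith [neg_abs_le (a * b)]).eq_or_lt with hden | hden
  · rw [← hden, div_zero, abs_zero]
    positivity
  rw [abs_div, abs_of_pos hden, div_le_div_iff₀ hden (by positivity)]
  have ha2 : a ^ 2 ≤ 1 := sq_le_one_iff_abs_le_one a |>.2 ha
  have hb2 : b ^ 2 ≤ 1 := sq_le_one_iff_abs_le_one b |>.2 hb
  rcases abs_cases a with ⟨ea, _⟩ | ⟨ea, _⟩ <;> rcases abs_cases b with ⟨eb, _⟩ | ⟨eb, _⟩ <;>
    rcases abs_cases (a + b) with ⟨e, _⟩ | ⟨e, _⟩ <;> rw [ea, eb, e] <;> nlinarith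

lemma sqrt_add_div_one_add_mul_le {s t : ℝ} (hs₀ : 0 ≤ s) (hs₁ : s ≤ 1) (ht₀ : 0 ≤ t)
    (ht₁ : t ≤ 1) : √((s + t) / (1 + s * t)) ≤ 1 - (1 - √s) * (1 - √t) := by
  obtain ⟨u, hu₀, rfl⟩ : ∃ u, 0 ≤ u ∧ s = u ^ 2 :=
    ⟨√s, Real.sqrt_nonneg s, (Real.sq_sqrt hs₀).symm⟩
  obtain ⟨v, hv₀, rfl⟩ : ∃ v, 0 ≤ v ∧ t = v ^ 2 :=
    ⟨√t, Real.sqrt_nonneg t, (Real.sq_sqrt ht₀).symm⟩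
  have hu₁ : u ≤ 1 := by nlinarith
  have hv₁ : v ≤ 1 := by nlinarith
  rw [Real.sqrt_sq hu₀, Real.sqrt_sq hv₀, Real.sqrt_le_iff, div_le_iff₀ (by positivity)]
  refine ⟨by nlinarith [mul_nonneg (sub_nonneg.2 hu₁) (sub_nonneg.2 hv₁)], ?_⟩
  -- the gap is `u v (1 - u) (1 - v) (2 - u v (1 + u + v - u v))`
  have hfactor : 0 ≤ 2 - u * v * (1 + u + v - u * v) := by nlinarith [mul_nonneg hu₀ hv₀]
  nlinarith [mul_nonneg (mul_nonneg (mul_nonneg (mul_nonneg hu₀ hv₀) (sub_nonneg.2 hu₁))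
    (sub_nonneg.2 hv₁)) hfactor]

lemma sqrt_abs_add_div_one_add_mul_le {a b : ℝ} (ha : |a| ≤ 1) (hb : |b| ≤ 1) :
    √|(a + b) / (1 + a * b)| ≤ 1 - (1 - √|a|) * (1 - √|b|) :=
  (Real.sqrt_le_sqrt (abs_add_div_one_add_mul_le ha hb)).trans
    (sqrt_add_div_one_add_mul_le (abs_nonneg a) ha (abs_nonneg b) hb)

lemma sum_sum_mul_mul_one_sub_mul_one_sub {ι : Type*} (s : Finset ι) (q f : ι → ℝ) :
    ∑ i ∈ s, ∑ j ∈ s, q i * q j * (1 - (1 - f i) * (1 - f j))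
      = (∑ i ∈ s, q i) ^ 2 - (∑ i ∈ s, q i * (1 - f i)) ^ 2 := by
  rw [sq, sq, sum_mul_sum, sum_mul_sum, ← sum_sub_distrib]
  refine sum_congr rfl fun i _ => ?_
  rw [← sum_sub_distrib]
  exact sum_congr rfl fun j _ => by ring

lemma add_div_one_add_mul_sub_div_add {v₀ v₁ t₀ t₁ : ℝ} (hv : v₀ + v₁ ≠ 0) (ht : t₀ + t₁ ≠ 0) :
    ((v₀ - v₁) / (v₀ + v₁) + (t₀ - t₁) / (t₀ + t₁))
        / (1 + (v₀ - v₁) / (v₀ + v₁) * ((t₀ - t₁) / (t₀ + t₁)))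
      = (v₀ * t₀ - v₁ * t₁) / (v₀ * t₀ + v₁ * t₁) := by
  rw [div_add_div _ _ hv ht, div_mul_div_comm, one_add_div (mul_ne_zero hv ht),
    div_div_div_cancel_right₀ (mul_ne_zero hv ht),
    show (v₀ - v₁) * (t₀ + t₁) + (v₀ + v₁) * (t₀ - t₁) = 2 * (v₀ * t₀ - v₁ * t₁) by ring,
    show (v₀ + v₁) * (t₀ + t₁) + (v₀ - v₁) * (t₀ - t₁) = 2 * (v₀ * t₀ + v₁ * t₁) by ring,
    mul_div_mul_left _ _ two_ne_zero]

section Channel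

variable {Y : Type*}

lemma qOut_nonneg {W : Bool → Y → ℝ} {y : Y} (hW : ∀ x, 0 ≤ W x y) : 0 ≤ qOut W y :=
  div_nonneg (add_nonneg (hW false) (hW true)) zero_le_two

lemma sum_qOut_eq_one [Fintype Y] {W : Bool → Y → ℝ} (hW : ∀ x, ∑ y, W x y = 1) :
    ∑ y, qOut W y = 1 := by
  simp only [qOut, ← sum_div, sum_add_distrib, hW]
  norm_num

lemma abs_Δch_le_one {V : Bool → Y → ℝ} {y : Y} (hV : ∀ x, 0 ≤ V x y) : |Δch V y| ≤ 1 := by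
  unfold Δch
  rw [abs_div]
  refine div_le_one_of_le₀ ?_ (abs_nonneg _)
  rw [abs_of_nonneg (add_nonneg (hV false) (hV true))]
  exact abs_le.2 ⟨by linarith [hV false], by linarith [hV true]⟩

lemma polarPlus_nonneg {W : Bool → Y → ℝ} (hW : ∀ x y, 0 ≤ W x y) (u : Bool) (p : Y × Y × Bool) :
    0 ≤ polarPlus W u p :=
  mul_nonneg (mul_nonneg one_half_pos.le (hW _ _)) (hW _ _)

lemma sum_qOut_polarPlus (W : Bool → Y → ℝ) (y₁ y₂ : Y) :
    ∑ u : Bool, qOut (polarPlus W) (y₁, y₂, u) = qOut W y₁ * qOut W y₂ := by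
  simp only [Fintype.sum_bool, qOut, polarPlus, Bool.xor_false, Bool.xor_true, Bool.not_true,
    Bool.not_false]
  ring

lemma Δch_polarPlus_false {V : Bool → Y → ℝ} {y₁ y₂ : Y} (h₁ : V false y₁ + V true y₁ ≠ 0)
    (h₂ : V false y₂ + V true y₂ ≠ 0) :
    Δch (polarPlus V) (y₁, y₂, false)
      = (Δch V y₁ + Δch V y₂) / (1 + Δch V y₁ * Δch V y₂) := by
  simp only [Δch, polarPlus, Bool.false_xor]
  rw [add_div_one_add_mul_sub_div_add h₁ h₂, mul_assoc, mul_assoc, ← mul_sub, ← mul_add,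
    mul_div_mul_left _ _ one_half_pos.ne']

lemma Δch_polarPlus_true {V : Bool → Y → ℝ} {y₁ y₂ : Y} (h₁ : V false y₁ + V true y₁ ≠ 0)
    (h₂ : V false y₂ + V true y₂ ≠ 0) :
    Δch (polarPlus V) (y₁, y₂, true)
      = (-Δch V y₁ + Δch V y₂) / (1 + -Δch V y₁ * Δch V y₂) := by
  have hswap : -Δch V y₁ = (V true y₁ - V false y₁) / (V true y₁ + V false y₁) := by
    rw [Δch, ← neg_div, neg_sub, add_comm]
  rw [add_comm] at h₁
  simp only [Δch, polarPlus, Bool.true_xor, Bool.not_false, Bool.not_true] at hswap ⊢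
  rw [hswap, add_div_one_add_mul_sub_div_add h₁ h₂, mul_assoc, mul_assoc, ← mul_sub, ← mul_add,
    mul_div_mul_left _ _ one_half_pos.ne']

lemma sum_qOut_polarPlus_mul_sqrt_abs_Δch_le {W V : Bool → Y → ℝ} (hW : ∀ x y, 0 ≤ W x y)
    (hV : ∀ x y, 0 < V x y) (y₁ y₂ : Y) :
    ∑ u : Bool, qOut (polarPlus W) (y₁, y₂, u) * √|Δch (polarPlus V) (y₁, y₂, u)|
      ≤ qOut W y₁ * qOut W y₂ * (1 - (1 - √|Δch V y₁|) * (1 - √|Δch V y₂|)) := by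
  have hsum : ∀ y, V false y + V true y ≠ 0 := fun y => (add_pos (hV false y) (hV true y)).ne'
  have habs : ∀ y, |Δch V y| ≤ 1 := fun y => abs_Δch_le_one fun x => (hV x y).le
  have hΔ : ∀ u, √|Δch (polarPlus V) (y₁, y₂, u)| ≤ 1 - (1 - √|Δch V y₁|) * (1 - √|Δch V y₂|)
  | false => by
    rw [Δch_polarPlus_false (hsum y₁) (hsum y₂)]
    exact sqrt_abs_add_div_one_add_mul_le (habs y₁) (habs y₂)
  | true => by
    rw [Δch_polarPlus_true (hsum y₁) (hsum y₂), ← abs_neg (Δch V y₁)]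
    exact sqrt_abs_add_div_one_add_mul_le ((abs_neg _).trans_le (habs y₁)) (habs y₂)
  rw [← sum_qOut_polarPlus, sum_mul]
  exact sum_le_sum fun u _ =>
    mul_le_mul_of_nonneg_left (hΔ u) (qOut_nonneg fun x => polarPlus_nonneg hW x _)

end Channel

theorem Dpar_polarPlus_le_general {Y : Type*} [Fintype Y] (W V : Bool → Y → ℝ)
    (hW : IsBDMC W) (hVpos : ∀ x y, 0 < V x y) :
    Dpar (polarPlus W) (polarPlus V) ≤ 2 * Dpar W V - Dpar W V ^ 2 := by
  have hq : ∑ y, qOut W y = 1 := sum_qOut_eq_one hW.2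
  have hq' : ∑ y, qOut W y * (1 - √|Δch V y|) = 1 - Dpar W V := by
    simp only [mul_one_sub, sum_sub_distrib, hq, Dpar]
  calc Dpar (polarPlus W) (polarPlus V)
      = ∑ y₁, ∑ y₂, ∑ u : Bool,
          qOut (polarPlus W) (y₁, y₂, u) * √|Δch (polarPlus V) (y₁, y₂, u)| := by
        simp only [Dpar, Fintype.sum_prod_type]
    _ ≤ ∑ y₁, ∑ y₂, qOut W y₁ * qOut W y₂ * (1 - (1 - √|Δch V y₁|) * (1 - √|Δch V y₂|)) :=
        sum_le_sum fun y₁ _ => sum_le_sum fun y₂ _ =>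
          sum_qOut_polarPlus_mul_sqrt_abs_Δch_le hW.1 hVpos y₁ y₂
    _ = 2 * Dpar W V - Dpar W V ^ 2 := by
        rw [sum_sum_mul_mul_one_sub_mul_one_sub, hq, hq']
        ring

/-- `D(W⁺, V⁺) ≤ 2 D(W, V) − D(W, V)²`. -/
theorem Dpar_polarPlus_le {Y : Type*} [Fintype Y] (W V : Bool → Y → ℝ)
    (hW : IsBDMC W) (hV : IsBDMC V) (hVpos : ∀ x y, 0 < V x y) :
    Dpar (polarPlus W) (polarPlus V) ≤ 2 * Dpar W V - Dpar W V ^ 2 :=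
  Dpar_polarPlus_le_general W V hW hVpos
end

section
/- Let W and V be B-DMCs with the same finite output alphabet Y, and assume V(y|x) > 0 for all y ∈ Y and x ∈ {0,1}. Then I(W⁻, V⁻) = (1/4)∑_{y₁,y₂∈Y} [ W(y₁|0)W(y₂|0)·log₂(1 + Δ_V(y₁)Δ_V(y₂)) + W(y₁|0)W(y₂|1)·log₂(1 − Δ_V(y₁)Δ_V(y₂)) + W(y₁|1)W(y₂|0)·log₂(1 − Δ_V(y₁)Δ_V(y₂)) + W(y₁|1)W(y₂|1)·log₂(1 + Δ_V(y₁)Δ_V(y₂)) ]. -/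
open Finset
open scoped Classical

/-! Writing `Δ = Δ_V`, one has `V(0|y)/q_V(y) = 1 + Δ(y)` and `V(1|y)/q_V(y) = 1 - Δ(y)`, so
`I(W,V) = ½ ∑_y [W(y|0) log(1 + Δ(y)) + W(y|1) log(1 - Δ(y))]`. The minus transform multiplies
the Δ-parameters, `Δ_{V⁻}(y₁y₂) = Δ(y₁)Δ(y₂)`, and expanding `W⁻` gives the formula. -/

section Channel

variable {Y : Type*} (V : Bool → Y → ℝ)

theorem div_qOut_false_eq_one_add_Δch {y : Y} (hy : V false y + V true y ≠ 0) :
    V false y / qOut V y = 1 + Δch V y := by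
  unfold qOut Δch
  field_simp
  ring

theorem div_qOut_true_eq_one_sub_Δch {y : Y} (hy : V false y + V true y ≠ 0) :
    V true y / qOut V y = 1 - Δch V y := by
  unfold qOut Δch
  field_simp
  ring

theorem Imm_eq_sum_logb_Δch [Fintype Y] (W : Bool → Y → ℝ)
    (hV : ∀ y, V false y + V true y ≠ 0) :
    Imm W V = (1/2) * ∑ y : Y,
      (W false y * Real.logb 2 (1 + Δch V y) + W true y * Real.logb 2 (1 - Δch V y)) := by
  simp only [Imm, Fintype.sum_bool, div_qOut_false_eq_one_add_Δch V (hV _),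
    div_qOut_true_eq_one_sub_Δch V (hV _), ← Finset.sum_add_distrib, add_comm]

theorem polarMinus_false_add_true (p : Y × Y) :
    polarMinus V false p + polarMinus V true p
      = (1/2) * ((V false p.1 + V true p.1) * (V false p.2 + V true p.2)) := by
  simp only [polarMinus, Fintype.sum_bool, Bool.xor_false, Bool.xor_true, Bool.not_false,
    Bool.not_true]
  ring

theorem polarMinus_false_sub_true (p : Y × Y) :
    polarMinus V false p - polarMinus V true p
      = (1/2) * ((V false p.1 - V true p.1) * (V false p.2 - V true p.2)) := by
  simp only [polarMinus, Fintype.sum_bool, Bool.xor_false, Bool.xor_true, Bool.not_false,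
    Bool.not_true]
  ring

/-- No positivity is needed: when one of the two denominators vanishes, both sides are `0`. -/
theorem Δch_polarMinus (p : Y × Y) : Δch (polarMinus V) p = Δch V p.1 * Δch V p.2 := by
  rw [Δch, polarMinus_false_add_true, polarMinus_false_sub_true, mul_div_mul_left _ _ (by norm_num),
    mul_div_mul_comm, Δch, Δch]

end Channel

theorem Imm_polarMinus_eq_general {Y : Type*} [Fintype Y] (W V : Bool → Y → ℝ)
    (hVpos : ∀ x y, 0 < V x y) :
    Imm (polarMinus W) (polarMinus V) =
      (1/4) * ∑ y₁ : Y, ∑ y₂ : Y,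
        (W false y₁ * W false y₂ * Real.logb 2 (1 + Δch V y₁ * Δch V y₂)
         + W false y₁ * W true y₂ * Real.logb 2 (1 - Δch V y₁ * Δch V y₂)
         + W true y₁ * W false y₂ * Real.logb 2 (1 - Δch V y₁ * Δch V y₂)
         + W true y₁ * W true y₂ * Real.logb 2 (1 + Δch V y₁ * Δch V y₂)) := by
  have hV : ∀ y, V false y + V true y ≠ 0 := fun y => (add_pos (hVpos _ y) (hVpos _ y)).ne'
  have hVminus : ∀ p, polarMinus V false p + polarMinus V true p ≠ 0 := fun p => by
    rw [polarMinus_false_add_true]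
    exact mul_ne_zero (by norm_num) (mul_ne_zero (hV _) (hV _))
  rw [Imm_eq_sum_logb_Δch _ _ hVminus, Fintype.sum_prod_type, Finset.mul_sum, Finset.mul_sum]
  refine Finset.sum_congr rfl fun y₁ _ => ?_
  rw [Finset.mul_sum, Finset.mul_sum]
  refine Finset.sum_congr rfl fun y₂ _ => ?_
  simp only [Δch_polarMinus, polarMinus, Fintype.sum_bool, Bool.xor_false, Bool.xor_true,
    Bool.not_false, Bool.not_true]
  ring

/-- Explicit formula for `I(W⁻, V⁻)` in terms of `Δ_V`. -/
theorem Imm_polarMinus_eq {Y : Type*} [Fintype Y] (W V : Bool → Y → ℝ)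
    (hW : IsBDMC W) (hV : IsBDMC V) (hVpos : ∀ x y, 0 < V x y) :
    Imm (polarMinus W) (polarMinus V) =
      (1/4) * ∑ y₁ : Y, ∑ y₂ : Y,
        (W false y₁ * W false y₂ * Real.logb 2 (1 + Δch V y₁ * Δch V y₂)
         + W false y₁ * W true y₂ * Real.logb 2 (1 - Δch V y₁ * Δch V y₂)
         + W true y₁ * W false y₂ * Real.logb 2 (1 - Δch V y₁ * Δch V y₂)
         + W true y₁ * W true y₂ * Real.logb 2 (1 + Δch V y₁ * Δch V y₂)) :=
  Imm_polarMinus_eq_general W V hVpos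
end
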